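/- arXiv:1312.3918 — 2 statements merged into one kernel-verified Lean document; each statement's English description precedes it below -/
import Mathlib

section
/- Let A be a Noetherian abelian category and Z = θ + iψ a weak central charge on A. Define T_Z = {x ∈ A : for every quotient x ↠ x'', either the maximal subobject x''_0 of x'' with ψ(x''_0) = 0 equals x'', or θ(x''/x''_0) > 0}. Then T_Z is closed under quotients and extensions. -/
/-!
STATEMENT 5: Let `A` be a Noetherian abelian category and `Z = θ + iψ` a weak central
charge. The class `T_Z = {x : for every quotient x ↠ x'', either x''₀ = x'' or
θ(x''/x''₀) > 0}` (where `x''₀` is the maximal subobject of `x''` killed by `ψ`) is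
closed under quotients and extensions.
-/

open CategoryTheory CategoryTheory.Limits

universe v u

/-- A weak central charge `Z = θ + iψ` on an abelian category: `θ` and `ψ` are additive
on short exact sequences, `ψ ≥ 0` on all objects, and `θ ≥ 0` on objects with `ψ = 0`. -/
structure WeakCentralCharge (C : Type u) [Category.{v} C] [Abelian C] where
  θ : C → ℝ
  ψ : C → ℝ
  θ_additive : ∀ S : ShortComplex C, S.ShortExact → θ S.X₂ = θ S.X₁ + θ S.X₃
  ψ_additive : ∀ S : ShortComplex C, S.ShortExact → ψ S.X₂ = ψ S.X₁ + ψ S.X₃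
  ψ_nonneg : ∀ a : C, 0 ≤ ψ a
  θ_nonneg : ∀ a : C, ψ a = 0 → 0 ≤ θ a

/-- `i : a₀ ⟶ a` exhibits `a₀` as the maximal subobject of `a` on which `ψ` vanishes. -/
def IsMaxPsiZeroSub {C : Type u} [Category.{v} C] [Abelian C]
    (Z : WeakCentralCharge C) {a : C} (a₀ : C) (i : a₀ ⟶ a) : Prop :=
  Mono i ∧ Z.ψ a₀ = 0 ∧
    ∀ (y : C) (j : y ⟶ a), Mono j → Z.ψ y = 0 → ∃ k : y ⟶ a₀, k ≫ i = j

/-- The torsion class `T_Z` associated to a weak central charge `Z`: those `x` such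
that for every quotient `x ↠ x''`, with maximal `ψ = 0` subobject `x''₀ ⊆ x''`, either
`x''₀ = x''` or `θ(x''/x''₀) > 0`. -/
def TZ {C : Type u} [Category.{v} C] [Abelian C] (Z : WeakCentralCharge C) (x : C) : Prop :=
  ∀ (x'' : C) (p : x ⟶ x''), Epi p →
    ∀ (x₀ : C) (i : x₀ ⟶ x''), IsMaxPsiZeroSub Z x₀ i →
      (IsIso i ∨ 0 < Z.θ (cokernel i))

/-!
If `q` lies in `T_Z`, splitting off the maximal subobject `q₀` with `ψ(q₀) = 0` shows that
`ψ(q) = 0` or `θ(q) > 0`; in particular `θ(q) ≥ 0`. Now let `x` be an extension of `x₃` by `x₁`,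
both in `T_Z`, and `x ↠ x''`. The quotient `Q = x''/x''₀` has no nonzero subobject with `ψ = 0`.
The image `I` of `x₁` in `Q` is a quotient of `x₁` and `Q/I` is a quotient of `x₃`, so both have
`θ ≥ 0`, and `θ(Q) = θ(I) + θ(Q/I) > 0` unless `I = 0` and `ψ(Q/I) = 0`; but then `ψ(Q) = 0`,
which forces `Q = 0`, i.e. `x''₀ = x''`.
-/

section Additive

variable {C : Type u} [Category.{v} C] [Abelian C]

def IsAdditiveOnShortExact (f : C → ℝ) : Prop :=
  ∀ S : ShortComplex C, S.ShortExact → f S.X₂ = f S.X₁ + f S.X₃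

namespace IsAdditiveOnShortExact

variable {f : C → ℝ}

lemma eq_zero_of_isZero (hf : IsAdditiveOnShortExact f) {z : C} (hz : IsZero z) : f z = 0 := by
  have := hf (ShortComplex.mk (𝟙 z) (𝟙 z) (hz.eq_of_src _ _))
    { exact := ShortComplex.exact_of_isZero_X₂ _ hz }
  simpa using this.symm

lemma eq_add_cokernel (hf : IsAdditiveOnShortExact f) {a b : C} (i : a ⟶ b) [Mono i] :
    f b = f a + f (cokernel i) :=
  hf (ShortComplex.mk i (cokernel.π i) (cokernel.condition i))
    { exact := ShortComplex.exact_of_f_is_kernel _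
        (Abelian.monoIsKernelOfCokernel (CokernelCofork.ofπ _ (cokernel.condition i))
          (cokernelIsCokernel i)) }

lemma eq_kernel_add (hf : IsAdditiveOnShortExact f) {a b : C} (e : a ⟶ b) [Epi e] :
    f a = f (kernel e) + f b :=
  hf (ShortComplex.mk (kernel.ι e) e (kernel.condition e))
    { exact := ShortComplex.exact_of_f_is_kernel _ (kernelIsKernel e) }

lemma eq_of_iso (hf : IsAdditiveOnShortExact f) {a b : C} (e : a ≅ b) : f a = f b := by
  rw [hf.eq_add_cokernel e.hom,
    hf.eq_zero_of_isZero ((isZero_zero C).of_iso (cokernel.ofEpi e.hom)), add_zero]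

lemma biprod (hf : IsAdditiveOnShortExact f) (a b : C) : f (a ⊞ b) = f a + f b :=
  hf _ ({ r := biprod.fst, s := biprod.inr } :
    (ShortComplex.mk (biprod.inl : a ⟶ a ⊞ b) biprod.snd (by simp)).Splitting).shortExact

end IsAdditiveOnShortExact

end Additive

namespace WeakCentralCharge

variable {C : Type u} [Category.{v} C] [Abelian C] (Z : WeakCentralCharge C)

lemma θ_isAdditive : IsAdditiveOnShortExact Z.θ := Z.θ_additive

lemma ψ_isAdditive : IsAdditiveOnShortExact Z.ψ := Z.ψ_additive

lemma ψ_eq_zero_of_mono {a b : C} (i : a ⟶ b) [Mono i] (h : Z.ψ b = 0) : Z.ψ a = 0 := by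
  have := Z.ψ_isAdditive.eq_add_cokernel i
  linarith [Z.ψ_nonneg a, Z.ψ_nonneg (cokernel i)]

lemma ψ_le_of_epi {a b : C} (e : a ⟶ b) [Epi e] : Z.ψ b ≤ Z.ψ a := by
  have := Z.ψ_isAdditive.eq_kernel_add e
  linarith [Z.ψ_nonneg (kernel e)]

/-- The subobjects with `ψ = 0` are closed under binary joins, so a maximal one, which exists
by noetherianity, is the largest. -/
lemma exists_isMaxPsiZeroSub [Noetherian C] (a : C) :
    ∃ (a₀ : C) (i : a₀ ⟶ a), IsMaxPsiZeroSub Z a₀ i := by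
  let T : Set (Subobject a) := {s | Z.ψ (s : C) = 0}
  have hbot : ⊥ ∈ T :=
    Z.ψ_isAdditive.eq_zero_of_isZero ((isZero_zero C).of_iso Subobject.botCoeIsoZero)
  obtain ⟨m, hm, hmax⟩ := (wellFounded_gt (α := Subobject a)).has_min T ⟨⊥, hbot⟩
  refine ⟨m, m.arrow, inferInstance, hm, fun y j _ hy => ?_⟩
  let d : (m : C) ⊞ y ⟶ a := biprod.desc m.arrow j
  have hd : imageSubobject d ∈ T := by
    have hle := Z.ψ_le_of_epi (factorThruImageSubobject d)
    rw [Z.ψ_isAdditive.biprod, hm, hy] at hle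
    exact le_antisymm (by simpa using hle) (Z.ψ_nonneg _)
  have hm_le : m ≤ imageSubobject d :=
    Subobject.le_of_comm (biprod.inl ≫ factorThruImageSubobject d) (by simp [d])
  have hj_le : Subobject.mk j ≤ m := by
    refine le_trans (Subobject.mk_le_of_comm (biprod.inr ≫ factorThruImageSubobject d)
      (by simp [d])) ?_
    rcases hm_le.lt_or_eq with h | h
    · exact absurd h (hmax _ hd)
    · exact h.ge
  exact ⟨(Subobject.underlyingIso j).inv ≫ Subobject.ofLE _ _ hj_le, by simp⟩

def IsPsiTorsionFree (q : C) : Prop :=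
  ∀ (y : C) (j : y ⟶ q), Mono j → Z.ψ y = 0 → IsZero y

variable {Z}

lemma IsPsiTorsionFree.of_mono {p q : C} (hq : Z.IsPsiTorsionFree q) (j : p ⟶ q) [Mono j] :
    Z.IsPsiTorsionFree p :=
  fun y k _ hy => hq y (k ≫ j) inferInstance hy

lemma IsPsiTorsionFree.isZero_of_ψ_eq_zero {q : C} (hq : Z.IsPsiTorsionFree q)
    (h : Z.ψ q = 0) : IsZero q :=
  hq q (𝟙 q) inferInstance h

end WeakCentralCharge

/-- A subobject `j : y ⟶ x''/x''₀` with `ψ(y) = 0` pulls back to an extension of `y` by `x''₀`,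
which again has `ψ = 0` and so lies in `x''₀`; hence `j = 0`. -/
lemma IsMaxPsiZeroSub.isPsiTorsionFree_cokernel {C : Type u} [Category.{v} C] [Abelian C]
    {Z : WeakCentralCharge C} {a a₀ : C} {i : a₀ ⟶ a} (hi : IsMaxPsiZeroSub Z a₀ i) :
    Z.IsPsiTorsionFree (cokernel i) := by
  obtain ⟨_, hψ₀, hmax⟩ := hi
  intro y j _ hy
  let π := cokernel.π i
  have hker : (kernel.ι (pullback.snd π j) ≫ pullback.fst π j) ≫ π = 0 := by
    rw [Category.assoc, pullback.condition, kernel.condition_assoc, zero_comp]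
  have : Mono (Abelian.monoLift i _ hker) :=
    mono_of_mono_fac (Abelian.monoLift_comp i _ hker)
  have hP : Z.ψ (pullback π j) = 0 := by
    rw [Z.ψ_isAdditive.eq_kernel_add (pullback.snd π j), hy, add_zero]
    exact Z.ψ_eq_zero_of_mono (Abelian.monoLift i _ hker) hψ₀
  obtain ⟨r, hr⟩ := hmax _ (pullback.fst π j) inferInstance hP
  have hsnd : pullback.snd π j = 0 := by
    rw [← cancel_mono j, ← pullback.condition, ← hr, Category.assoc, cokernel.condition,
      comp_zero, zero_comp]
  have : Epi (0 : pullback π j ⟶ y) := by rw [← hsnd]; infer_instance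
  exact IsZero.of_epi_zero (pullback π j) y

namespace TZ

variable {C : Type u} [Category.{v} C] [Abelian C] {Z : WeakCentralCharge C}

lemma of_epi {x q : C} (hx : TZ Z x) (p : x ⟶ q) [Epi p] : TZ Z q :=
  fun x'' p' _ x₀ i hi => hx x'' (p ≫ p') inferInstance x₀ i hi

variable [Noetherian C]

lemma ψ_eq_zero_or_θ_pos {q : C} (hq : TZ Z q) : Z.ψ q = 0 ∨ 0 < Z.θ q := by
  obtain ⟨q₀, i, hi⟩ := Z.exists_isMaxPsiZeroSub q
  have : Mono i := hi.1
  have hψ₀ : Z.ψ q₀ = 0 := hi.2.1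
  rcases hq q (𝟙 q) inferInstance q₀ i hi with h | h
  · exact Or.inl ((Z.ψ_isAdditive.eq_of_iso (asIso i)).symm.trans hψ₀)
  · rw [Z.θ_isAdditive.eq_add_cokernel i]
    exact Or.inr (by linarith [Z.θ_nonneg q₀ hψ₀])

lemma θ_nonneg {q : C} (hq : TZ Z q) : 0 ≤ Z.θ q :=
  hq.ψ_eq_zero_or_θ_pos.elim (Z.θ_nonneg q) le_of_lt

lemma isZero_or_θ_pos {q : C} (hq : TZ Z q) (htf : Z.IsPsiTorsionFree q) :
    IsZero q ∨ 0 < Z.θ q :=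
  hq.ψ_eq_zero_or_θ_pos.imp_left htf.isZero_of_ψ_eq_zero

lemma isZero_or_θ_pos_of_shortExact {S : ShortComplex C} (hS : S.ShortExact)
    (h₁ : TZ Z S.X₁) (h₃ : TZ Z S.X₃) {q : C} (f : S.X₂ ⟶ q) [Epi f]
    (htf : Z.IsPsiTorsionFree q) : IsZero q ∨ 0 < Z.θ q := by
  let g := S.f ≫ f
  have hI : TZ Z (image g) := h₁.of_epi (factorThruImage g)
  have hg : g ≫ cokernel.π (image.ι g) = 0 := by
    rw [← image.fac_assoc, cokernel.condition, comp_zero]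
  obtain ⟨u, hu⟩ := CokernelCofork.IsColimit.desc' hS.gIsCokernel
    (f ≫ cokernel.π (image.ι g)) ((Category.assoc _ _ _).symm.trans hg)
  have : Epi u := epi_of_epi_fac hu
  have hQ : TZ Z (cokernel (image.ι g)) := h₃.of_epi u
  have hθ := Z.θ_isAdditive.eq_add_cokernel (image.ι g)
  have hψ := Z.ψ_isAdditive.eq_add_cokernel (image.ι g)
  rcases hI.isZero_or_θ_pos (htf.of_mono (image.ι g)) with hI0 | hIpos
  · rcases hQ.ψ_eq_zero_or_θ_pos with hQψ | hQpos
    · left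
      refine htf.isZero_of_ψ_eq_zero ?_
      rw [hψ, Z.ψ_isAdditive.eq_zero_of_isZero hI0, hQψ, add_zero]
    · right
      rw [hθ, Z.θ_isAdditive.eq_zero_of_isZero hI0, zero_add]
      exact hQpos
  · exact Or.inr (by linarith [hQ.θ_nonneg])

lemma of_shortExact {S : ShortComplex C} (hS : S.ShortExact) (h₁ : TZ Z S.X₁)
    (h₃ : TZ Z S.X₃) : TZ Z S.X₂ := by
  intro x'' p _ x₀ i hi
  have : Mono i := hi.1
  refine (isZero_or_θ_pos_of_shortExact hS h₁ h₃ (p ≫ cokernel.π i)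
    hi.isPsiTorsionFree_cokernel).imp_left fun h => ?_
  have : Epi i := Preadditive.epi_of_isZero_cokernel i h
  exact isIso_of_mono_of_epi i

end TZ

theorem TZ_closed_under_quotients_and_extensions
    {C : Type u} [Category.{v} C] [Abelian C] [Noetherian C]
    (Z : WeakCentralCharge C) :
    -- closed under quotients
    (∀ {x q : C} (p : x ⟶ q), Epi p → TZ Z x → TZ Z q) ∧
    -- closed under extensions
    (∀ S : ShortComplex C, S.ShortExact → TZ Z S.X₁ → TZ Z S.X₃ → TZ Z S.X₂) :=
  ⟨fun p _ hx => hx.of_epi p, fun _ hS h₁ h₃ => TZ.of_shortExact hS h₁ h₃⟩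
end

section
/- Let A be a finite-dimensional k-algebra with indecomposable idempotents e_1, …, e_m, and let M be a finite-dimensional right A-module such that Me_1 is one-dimensional and generates M. Define θ on simple modules by θ(S_1) = dim_k(M) − 1 and θ(S_i) = −1 for i = 2, …, m. Then M is θ-stable: θ(M'') > 0 for every nonzero proper quotient M ↠ M'' (equivalently θ(M') < 0 = θ(M) for every nonzero proper submodule). -/
/-!
STATEMENT 14: Let `A` be a finite-dimensional `k`-algebra whose simple modules are
one-dimensional, with complete orthogonal family of indecomposable idempotents
`e₀, …, e_m`, and `M` a finite-dimensional `A`-module such that `M·e₀` is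
one-dimensional and generates `M`. Define `θ` on dimension vectors by
`θ(S₀) = dim_k M − 1` and `θ(S_i) = −1` for `i ≥ 1`, i.e.
`θ(N) = (dim_k M − 1)·dim_k(N e₀) − Σ_{i ≥ 1} dim_k(N e_i)`.
Then `M` is `θ`-stable: `θ(M'') > 0` for every nonzero proper quotient `M ↠ M''`.

(We work with left modules; `e • N` plays the role of `N e`.)
-/

open Module

/-- The `k`-subspace `e·N` of a module `N` cut out by an element `e` of the algebra. -/
def eSpace (k : Type*) [Field k] {A : Type*} [Ring A] [Algebra k A]
    (e : A) (N : Type*) [AddCommGroup N] [Module k N] [Module A N] : Submodule k N :=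
  Submodule.span k (Set.range fun n : N => e • n)

/-- `θ(N) = (d − 1)·dim_k(e₀ N) − Σ_{i ≥ 1} dim_k(e_i N)`, where `d = dim_k M`. -/
noncomputable def thetaDim (k : Type*) [Field k] {A : Type*} [Ring A] [Algebra k A]
    {m : ℕ} (e : Fin (m + 1) → A) (d : ℕ)
    (N : Type*) [AddCommGroup N] [Module k N] [Module A N] : ℤ :=
  ((d : ℤ) - 1) * (finrank k (eSpace k (e 0) N) : ℤ) -
    ∑ i : Fin m, (finrank k (eSpace k (e i.succ) N) : ℤ)

/-!
Let `Q = M ⧸ N`. Since `e₀ M` generates `M` and `N ≠ M`, the space `e₀ Q` is nonzero; since the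
`eᵢ` are orthogonal idempotents, the spaces `eᵢ Q` are independent. With `a = dim e₀ Q ≥ 1` and
`s = Σ_{i ≥ 1} dim eᵢ Q` this gives `a + s ≤ dim Q < dim M`, hence
`θ(Q) = (dim M - 1) a - s ≥ a · dim M - dim Q > 0`.
-/

section eSpace

variable {k : Type*} [Field k] {A : Type*} [Ring A] [Algebra k A]
  {N : Type*} [AddCommGroup N] [Module k N] [Module A N] [SMulCommClass A k N]

lemma eSpace_eq_range (e : A) :
    eSpace k e N = LinearMap.range (DistribSMul.toLinearMap k N e) := by
  rw [eSpace, ← Submodule.span_eq (LinearMap.range _)]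
  rfl

lemma mem_eSpace {e : A} {x : N} : x ∈ eSpace k e N ↔ ∃ n : N, e • n = x := by
  rw [eSpace_eq_range]
  rfl

lemma smul_eq_self_of_mem_eSpace {e : A} (he : IsIdempotentElem e) {x : N}
    (hx : x ∈ eSpace k e N) : e • x = x := by
  obtain ⟨n, rfl⟩ := mem_eSpace.1 hx
  rw [smul_smul, he.eq]

lemma smul_eq_zero_of_mem_eSpace {e e' : A} (h : e * e' = 0) {x : N}
    (hx : x ∈ eSpace k e' N) : e • x = 0 := by
  obtain ⟨n, rfl⟩ := mem_eSpace.1 hx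
  rw [smul_smul, h, zero_smul]

variable {ι : Type*} [Fintype ι] {e : ι → A}

lemma smul_sum_eSpace (hidem : ∀ i, IsIdempotentElem (e i))
    (horth : ∀ i j, i ≠ j → e i * e j = 0) (x : ∀ i, eSpace k (e i) N) (j : ι) :
    e j • ∑ i, (x i : N) = x j := by
  rw [Finset.smul_sum, Finset.sum_eq_single j]
  · exact smul_eq_self_of_mem_eSpace (hidem j) (x j).2
  · exact fun i _ hij => smul_eq_zero_of_mem_eSpace (horth j i (Ne.symm hij)) (x i).2
  · exact fun hj => absurd (Finset.mem_univ j) hj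

lemma sum_finrank_eSpace_le_finrank [FiniteDimensional k N]
    (hidem : ∀ i, IsIdempotentElem (e i)) (horth : ∀ i j, i ≠ j → e i * e j = 0) :
    ∑ i, finrank k (eSpace k (e i) N) ≤ finrank k N := by
  let g : (∀ i, eSpace k (e i) N) →ₗ[k] N := ∑ i, (eSpace k (e i) N).subtype ∘ₗ LinearMap.proj i
  let f : N → ∀ i, eSpace k (e i) N := fun n i => ⟨e i • n, mem_eSpace.2 ⟨n, rfl⟩⟩
  have hfg : Function.LeftInverse f g := fun x =>
    funext fun j => Subtype.ext (by simpa [f, g] using smul_sum_eSpace hidem horth x j)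
  rw [← finrank_pi_fintype k]
  exact LinearMap.finrank_le_finrank_of_injective hfg.injective

end eSpace

section Quotient

variable {k : Type*} [Field k] {A : Type*} [Ring A]
  {M : Type*} [AddCommGroup M] [Module k M] [Module A M]

lemma finrank_quotient_lt_of_ne_bot [SMul k A] [IsScalarTower k A M] [FiniteDimensional k M]
    {P : Submodule A M} (hP : P ≠ ⊥) : finrank k (M ⧸ P) < finrank k M := by
  have hpos : 0 < finrank k (P.restrictScalars k) :=
    Submodule.one_le_finrank_iff.2 ((Submodule.restrictScalars_eq_bot_iff k A M).not.2 hP)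
  have := (P.restrictScalars k).finrank_quotient_add_finrank
  exact lt_of_lt_of_eq (Nat.lt_add_of_pos_right hpos) this

lemma eSpace_quotient_ne_bot [Algebra k A] [IsScalarTower k A M] {e : A}
    (hgen : Submodule.span A (Set.range fun x : M => e • x) = ⊤) {P : Submodule A M}
    (hP : P ≠ ⊤) : eSpace k e (M ⧸ P) ≠ ⊥ := by
  contrapose! hP
  rw [eq_top_iff, ← hgen, Submodule.span_le]
  rintro _ ⟨x, rfl⟩
  have hmem : P.mkQ (e • x) ∈ eSpace k e (M ⧸ P) :=
    mem_eSpace.2 ⟨P.mkQ x, (P.mkQ.map_smul e x).symm⟩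
  rw [hP, Submodule.mem_bot] at hmem
  exact (Submodule.Quotient.mk_eq_zero P).1 hmem

end Quotient

theorem generated_module_is_theta_stable_general
    {k : Type*} [Field k] {A : Type*} [Ring A] [Algebra k A]
    {M : Type*} [AddCommGroup M] [Module k M] [Module A M] [IsScalarTower k A M]
    [FiniteDimensional k M]
    {m : ℕ} (e : Fin (m + 1) → A)
    -- complete orthogonal family of idempotents
    (hidem : ∀ i, e i * e i = e i)
    (horth : ∀ i j, i ≠ j → e i * e j = 0)
    -- `e₀·M` is one-dimensional and generates `M`
    (hgen : Submodule.span A (Set.range fun x : M => e 0 • x) = ⊤) :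
    ∀ N : Submodule A M, N ≠ ⊥ → N ≠ ⊤ →
      0 < thetaDim k e (finrank k M) (M ⧸ N) := by
  intro N hbot htop
  have hQ : finrank k (M ⧸ N) < finrank k M := finrank_quotient_lt_of_ne_bot hbot
  have ha : 1 ≤ finrank k (eSpace k (e 0) (M ⧸ N)) :=
    Submodule.one_le_finrank_iff.2 (eSpace_quotient_ne_bot hgen htop)
  have hs := sum_finrank_eSpace_le_finrank (k := k) (N := M ⧸ N) hidem horth
  rw [Fin.sum_univ_succ] at hs
  rw [thetaDim]
  zify at hQ ha hs
  nlinarith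

theorem generated_module_is_theta_stable
    {k : Type*} [Field k] {A : Type*} [Ring A] [Algebra k A] [FiniteDimensional k A]
    {M : Type*} [AddCommGroup M] [Module k M] [Module A M] [IsScalarTower k A M]
    [FiniteDimensional k M]
    {m : ℕ} (e : Fin (m + 1) → A)
    -- complete orthogonal family of idempotents
    (hidem : ∀ i, e i * e i = e i)
    (horth : ∀ i j, i ≠ j → e i * e j = 0)
    (hsum : ∑ i, e i = 1)
    -- `e₀·M` is one-dimensional and generates `M`
    (hdim : finrank k (eSpace k (e 0) M) = 1)
    (hgen : Submodule.span A (Set.range fun x : M => e 0 • x) = ⊤) :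
    ∀ N : Submodule A M, N ≠ ⊥ → N ≠ ⊤ →
      0 < thetaDim k e (finrank k M) (M ⧸ N) :=
  generated_module_is_theta_stable_general e hidem horth hgen
end
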